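/- Let (B, Δ, ε) be a coalgebra which is also a unital algebra, and let H be an invertible element of B such that: (a) Δ(b z) = b₁ z ⊗ b₂ for all b ∈ B and all z in the subalgebra generated by H and H⁻¹; and (b) ε(H b₁) b₂ = H b for all b ∈ B. Define Δ̃(b) = (1 ⊗ H⁻¹) Δ(b) and ε̃(b) = ε(H b). Then (B, Δ̃, ε̃) is a coassociative counital coalgebra: (Δ̃ ⊗ id)Δ̃ = (id ⊗ Δ̃)Δ̃ and (ε̃ ⊗ id)Δ̃(b) = b = (id ⊗ ε̃)Δ̃(b). -/
import Mathlib


open TensorProduct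

noncomputable section

variable {B : Type*} [Ring B] [Algebra ℂ B]

/-- `x ⊗ y ↦ ε(x) • y` -/
def contractL (ε : B →ₗ[ℂ] ℂ) : B ⊗[ℂ] B →ₗ[ℂ] B :=
  TensorProduct.lift ((LinearMap.lsmul ℂ B).comp ε)

/-- `x ⊗ y ↦ ε(y) • x` -/
def contractR (ε : B →ₗ[ℂ] ℂ) : B ⊗[ℂ] B →ₗ[ℂ] B :=
  TensorProduct.lift (((LinearMap.lsmul ℂ B).comp ε).flip)

/-- the deformed comultiplication `Δ̃(b) = (1 ⊗ H⁻¹) Δ(b)` -/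
def deltaTilde (Δ : B →ₗ[ℂ] B ⊗[ℂ] B) (Hinv : B) : B →ₗ[ℂ] B ⊗[ℂ] B :=
  (LinearMap.mulLeft ℂ ((1 : B) ⊗ₜ[ℂ] Hinv)).comp Δ

/-- the deformed counit `ε̃(b) = ε(H b)` -/
def epsTilde (ε : B →ₗ[ℂ] ℂ) (H : B) : B →ₗ[ℂ] ℂ :=
  ε.comp (LinearMap.mulLeft ℂ H)

/-- auxiliary contraction `x ⊗ t ↦ ε'(x) • t` on `B ⊗ (B ⊗ B)` -/
def cLL (ε' : B →ₗ[ℂ] ℂ) : B ⊗[ℂ] (B ⊗[ℂ] B) →ₗ[ℂ] B ⊗[ℂ] B :=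
  TensorProduct.lift ((LinearMap.lsmul ℂ (B ⊗[ℂ] B)).comp ε')

lemma contractL_tmul (ε : B →ₗ[ℂ] ℂ) (x y : B) :
    contractL ε (x ⊗ₜ[ℂ] y) = ε x • y := rfl

lemma contractR_tmul (ε : B →ₗ[ℂ] ℂ) (x y : B) :
    contractR ε (x ⊗ₜ[ℂ] y) = ε y • x := rfl

lemma cLL_tmul (ε' : B →ₗ[ℂ] ℂ) (x : B) (t : B ⊗[ℂ] B) :
    cLL ε' (x ⊗ₜ[ℂ] t) = ε' x • t := rfl

lemma epsTilde_apply (ε : B →ₗ[ℂ] ℂ) (H x : B) : epsTilde ε H x = ε (H * x) := rfl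

/-- contracting with `ε̃` is contracting with `ε` after multiplying by `H ⊗ 1`. -/
lemma contractL_epsTilde (ε : B →ₗ[ℂ] ℂ) (H : B) (t : B ⊗[ℂ] B) :
    contractL (epsTilde ε H) t = contractL ε ((H ⊗ₜ[ℂ] (1 : B)) * t) := by
  induction t using TensorProduct.induction_on with
  | zero => simp
  | tmul x y =>
      simp [contractL_tmul, epsTilde_apply, Algebra.TensorProduct.tmul_mul_tmul]
  | add s t hs ht => simp [mul_add, hs, ht]

/-- restatement of hypothesis (b) -/
lemma hb' (Δ : B →ₗ[ℂ] B ⊗[ℂ] B) (ε : B →ₗ[ℂ] ℂ) (H : B)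
    (hb : ∀ b : B, contractL ε ((H ⊗ₜ[ℂ] (1 : B)) * Δ b) = H * b) (b : B) :
    contractL (epsTilde ε H) (Δ b) = H * b := by
  rw [contractL_epsTilde]; exact hb b

/-- The key consequence of (b) and coassociativity: `Δ(Hb) = (H ⊗ 1)Δ(b)`. -/
lemma key1 (Δ : B →ₗ[ℂ] B ⊗[ℂ] B) (ε : B →ₗ[ℂ] ℂ)
    (hcoassoc : ∀ b : B, (TensorProduct.assoc ℂ B B B) ((LinearMap.rTensor B Δ) (Δ b)) =
      (LinearMap.lTensor B Δ) (Δ b))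
    (H : B)
    (hb : ∀ b : B, contractL ε ((H ⊗ₜ[ℂ] (1 : B)) * Δ b) = H * b) (b : B) :
    Δ (H * b) = (H ⊗ₜ[ℂ] (1 : B)) * Δ b := by
  have claimA : ∀ t : B ⊗[ℂ] B,
      Δ (contractL (epsTilde ε H) t) = cLL (epsTilde ε H) (LinearMap.lTensor B Δ t) := by
    intro t
    induction t using TensorProduct.induction_on with
    | zero => simp
    | tmul x y => simp [contractL_tmul, cLL_tmul]
    | add s t hs ht => simp [hs, ht]
  have claimB : ∀ u : (B ⊗[ℂ] B) ⊗[ℂ] B,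
      cLL (epsTilde ε H) ((TensorProduct.assoc ℂ B B B) u)
        = LinearMap.rTensor B (contractL (epsTilde ε H)) u := by
    intro u
    induction u using TensorProduct.induction_on with
    | zero => simp only [LinearMap.map_zero, LinearEquiv.map_zero]
    | tmul s z =>
        induction s using TensorProduct.induction_on with
        | zero =>
            simp only [zero_tmul, LinearMap.map_zero, LinearEquiv.map_zero]
        | tmul x y => simp [cLL_tmul, contractL_tmul, smul_tmul']
        | add s t hs ht => simp [add_tmul, hs, ht]
    | add s t hs ht => simp [hs, ht]
  have claimC : ∀ t : B ⊗[ℂ] B,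
      LinearMap.rTensor B (contractL (epsTilde ε H)) (LinearMap.rTensor B Δ t)
        = (H ⊗ₜ[ℂ] (1 : B)) * t := by
    intro t
    induction t using TensorProduct.induction_on with
    | zero => simp
    | tmul x y =>
        simp only [LinearMap.rTensor_tmul, hb' Δ ε H hb, Algebra.TensorProduct.tmul_mul_tmul,
          one_mul]
    | add s t hs ht => simp [mul_add, hs, ht]
  calc Δ (H * b) = Δ (contractL (epsTilde ε H) (Δ b)) := by rw [hb' Δ ε H hb]
    _ = cLL (epsTilde ε H) (LinearMap.lTensor B Δ (Δ b)) := claimA _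
    _ = cLL (epsTilde ε H) ((TensorProduct.assoc ℂ B B B) (LinearMap.rTensor B Δ (Δ b))) := by
        rw [hcoassoc]
    _ = LinearMap.rTensor B (contractL (epsTilde ε H)) (LinearMap.rTensor B Δ (Δ b)) := claimB _
    _ = (H ⊗ₜ[ℂ] (1 : B)) * Δ b := claimC _

/-- Consequence: `Δ(H⁻¹ b) = (H⁻¹ ⊗ 1)Δ(b)`. -/
lemma key2 (Δ : B →ₗ[ℂ] B ⊗[ℂ] B) (ε : B →ₗ[ℂ] ℂ)
    (hcoassoc : ∀ b : B, (TensorProduct.assoc ℂ B B B) ((LinearMap.rTensor B Δ) (Δ b)) =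
      (LinearMap.lTensor B Δ) (Δ b))
    (H Hinv : B) (hH1 : H * Hinv = 1) (hH2 : Hinv * H = 1)
    (hb : ∀ b : B, contractL ε ((H ⊗ₜ[ℂ] (1 : B)) * Δ b) = H * b) (b : B) :
    Δ (Hinv * b) = (Hinv ⊗ₜ[ℂ] (1 : B)) * Δ b := by
  have h := key1 Δ ε hcoassoc H hb (Hinv * b)
  rw [← mul_assoc, hH1, one_mul] at h
  rw [h, ← mul_assoc, Algebra.TensorProduct.tmul_mul_tmul, hH2, one_mul,
    ← Algebra.TensorProduct.one_def, one_mul]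

/-- `(B, Δ̃, ε̃)` is a coassociative counital coalgebra. -/
theorem deformed_coalgebra [FiniteDimensional ℂ B]
    (Δ : B →ₗ[ℂ] B ⊗[ℂ] B) (ε : B →ₗ[ℂ] ℂ)
    (hcoassoc : ∀ b : B, (TensorProduct.assoc ℂ B B B) ((LinearMap.rTensor B Δ) (Δ b)) =
      (LinearMap.lTensor B Δ) (Δ b))
    (hcounitL : ∀ b : B, contractL ε (Δ b) = b)
    (hcounitR : ∀ b : B, contractR ε (Δ b) = b)
    (H Hinv : B) (hH1 : H * Hinv = 1) (hH2 : Hinv * H = 1)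
    (ha : ∀ b z : B, z ∈ Algebra.adjoin ℂ ({H, Hinv} : Set B) →
      Δ (b * z) = Δ b * (z ⊗ₜ[ℂ] (1 : B)))
    (hb : ∀ b : B, contractL ε ((H ⊗ₜ[ℂ] (1 : B)) * Δ b) = H * b) :
    (∀ b : B, (TensorProduct.assoc ℂ B B B)
        ((LinearMap.rTensor B (deltaTilde Δ Hinv)) (deltaTilde Δ Hinv b)) =
      (LinearMap.lTensor B (deltaTilde Δ Hinv)) (deltaTilde Δ Hinv b)) ∧
    (∀ b : B, contractL (epsTilde ε H) (deltaTilde Δ Hinv b) = b) ∧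
    (∀ b : B, contractR (epsTilde ε H) (deltaTilde Δ Hinv b) = b) := by
  have hdt : ∀ b : B, deltaTilde Δ Hinv b = ((1 : B) ⊗ₜ[ℂ] Hinv) * Δ b := fun b => rfl
  refine ⟨?_, ?_, ?_⟩
  · -- coassociativity
    intro b
    -- LHS = (1 ⊗ Hinv ⊗ Hinv) applied to assoc (rTensor Δ (Δ b))
    have L1 : ∀ t : B ⊗[ℂ] B,
        (TensorProduct.assoc ℂ B B B)
            (LinearMap.rTensor B (deltaTilde Δ Hinv) (((1 : B) ⊗ₜ[ℂ] Hinv) * t))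
          = LinearMap.lTensor B (LinearMap.mulLeft ℂ (Hinv ⊗ₜ[ℂ] Hinv))
              ((TensorProduct.assoc ℂ B B B) (LinearMap.rTensor B Δ t)) := by
      intro t
      induction t using TensorProduct.induction_on with
      | zero => simp only [mul_zero, LinearMap.map_zero, LinearEquiv.map_zero]
      | tmul x y =>
          have : ∀ s : B ⊗[ℂ] B,
              (TensorProduct.assoc ℂ B B B)
                  ((((1 : B) ⊗ₜ[ℂ] Hinv) * s) ⊗ₜ[ℂ] (Hinv * y))
                = LinearMap.lTensor B (LinearMap.mulLeft ℂ (Hinv ⊗ₜ[ℂ] Hinv))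
                    ((TensorProduct.assoc ℂ B B B) (s ⊗ₜ[ℂ] y)) := by
            intro s
            induction s using TensorProduct.induction_on with
            | zero =>
                simp only [mul_zero, zero_tmul, LinearMap.map_zero, LinearEquiv.map_zero]
            | tmul a c =>
                simp [Algebra.TensorProduct.tmul_mul_tmul, one_mul]
            | add s t hs ht => simp [add_mul, mul_add, add_tmul, hs, ht]
          simp only [Algebra.TensorProduct.tmul_mul_tmul, one_mul,
            LinearMap.rTensor_tmul, hdt]
          exact this (Δ x)
      | add s t hs ht => simp [mul_add, hs, ht]
    -- RHS = (1 ⊗ Hinv ⊗ Hinv) applied to lTensor Δ (Δ b)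
    have L2 : ∀ t : B ⊗[ℂ] B,
        LinearMap.lTensor B (deltaTilde Δ Hinv) (((1 : B) ⊗ₜ[ℂ] Hinv) * t)
          = LinearMap.lTensor B (LinearMap.mulLeft ℂ (Hinv ⊗ₜ[ℂ] Hinv))
              (LinearMap.lTensor B Δ t) := by
      intro t
      induction t using TensorProduct.induction_on with
      | zero => simp
      | tmul x y =>
          simp only [Algebra.TensorProduct.tmul_mul_tmul, one_mul,
            LinearMap.lTensor_tmul, LinearMap.mulLeft_apply, hdt,
            key2 Δ ε hcoassoc H Hinv hH1 hH2 hb y]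
          congr 1
          rw [← mul_assoc, Algebra.TensorProduct.tmul_mul_tmul, one_mul, mul_one]
      | add s t hs ht => simp [mul_add, hs, ht]
    rw [hdt, L1 (Δ b), L2 (Δ b), hcoassoc]
  · -- left counit
    intro b
    have L : ∀ t : B ⊗[ℂ] B,
        contractL (epsTilde ε H) (((1 : B) ⊗ₜ[ℂ] Hinv) * t)
          = Hinv * contractL (epsTilde ε H) t := by
      intro t
      induction t using TensorProduct.induction_on with
      | zero => simp
      | tmul x y =>
          simp [Algebra.TensorProduct.tmul_mul_tmul, contractL_tmul, mul_smul_comm]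
      | add s t hs ht => simp [mul_add, hs, ht]
    rw [hdt, L, hb' Δ ε H hb, ← mul_assoc, hH2, one_mul]
  · -- right counit
    intro b
    have R : ∀ t : B ⊗[ℂ] B,
        contractR (epsTilde ε H) (((1 : B) ⊗ₜ[ℂ] Hinv) * t) = contractR ε t := by
      intro t
      induction t using TensorProduct.induction_on with
      | zero => simp
      | tmul x y =>
          simp [Algebra.TensorProduct.tmul_mul_tmul, contractR_tmul, epsTilde_apply,
            ← mul_assoc, hH1]
      | add s t hs ht => simp [mul_add, hs, ht]
    rw [hdt, R, hcounitR]
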